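/- Let n ≥ 2, let B′ ⊆ ℂ^{n−1} be the open unit ball centered at 0, and let Δ ⊆ ℂ be the open unit disc. Let 0 < θ < r < R < 1. Then there exists a constant C > 0, depending only on n, θ, r and R, such that every holomorphic function f on B′ × Δ satisfies |f(z′, z_n)|² ≤ C ∫_{B′ × {w ∈ ℂ : r < |w| < R}} |f|² dV for every point (z′, z_n) ∈ ℂ^{n−1} × ℂ with |z′| ≤ θ and |z_n| ≤ θ. (This sup-by-L²-on-an-annular-region estimate, via the Cauchy integral formula in the last variable, is the final estimate in the paper's proof of Theorem 1.2.) -/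

import Mathlib

open MeasureTheory Metric Complex Set ENNReal

noncomputable section

/-- Lebesgue measure on `ℂⁿ` (with its Euclidean metric structure). -/
noncomputable instance (n : ℕ) : MeasureSpace (EuclideanSpace ℂ (Fin n)) :=
  { toMeasurableSpace := inferInstance
    volume := Measure.map (WithLp.toLp 2) (volume : Measure (Fin n → ℂ)) }

instance (n : ℕ) : BorelSpace (EuclideanSpace ℂ (Fin n)) :=
  inferInstanceAs (BorelSpace (PiLp 2 (fun _ : Fin n => ℂ)))

/-- The canonical extension of a nonpositive-infinity-allowing value to `ℝ≥0∞`: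
`⊤ ↦ ⊤`, `⊥ ↦ 0`, reals to `ENNReal.ofReal`. -/
def EReal.toENNReal' (x : EReal) : ℝ≥0∞ :=
  if x = ⊤ then ⊤ else ENNReal.ofReal x.toReal

/-- The integral of an `EReal`-valued function: upper part minus lower part,
computed with Lebesgue upper integrals and `EReal` subtraction. -/
def eIntegral {α : Type*} [MeasurableSpace α] (μ : Measure α) (f : α → EReal) : EReal :=
  ((∫⁻ a, (f a).toENNReal' ∂μ : ℝ≥0∞) : EReal) - ((∫⁻ a, (-(f a)).toENNReal' ∂μ : ℝ≥0∞) : EReal)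

/-- `e^x ∈ [0,∞]` for `x ∈ [-∞,∞]`. -/
def eexp (x : EReal) : ℝ≥0∞ :=
  if x = ⊤ then ⊤ else if x = ⊥ then 0 else ENNReal.ofReal (Real.exp x.toReal)

/-- A function `u : ℂⁿ → [-∞,∞)` is plurisubharmonic on an open set `U` if it is
upper semicontinuous on `U`, takes the value `⊤` nowhere on `U`, is not identically `⊥`
on any connected component of `U`, and satisfies the sub-mean value inequality on every
sufficiently small circle in every complex direction. -/
def IsPSH {n : ℕ} (U : Set (EuclideanSpace ℂ (Fin n))) (u : EuclideanSpace ℂ (Fin n) → EReal) :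
    Prop :=
  UpperSemicontinuousOn u U ∧
  (∀ x ∈ U, u x ≠ ⊤) ∧
  (∀ x ∈ U, ∃ y ∈ connectedComponentIn U x, u y ≠ ⊥) ∧
  ∀ a ∈ U, ∀ b : EuclideanSpace ℂ (Fin n), ∃ r₀ > (0:ℝ), ∀ r : ℝ, 0 < r → r < r₀ →
    (∀ θ : ℝ, a + ((r : ℂ) * Complex.exp (θ * Complex.I)) • b ∈ U) ∧
    u a ≤ (((2 * Real.pi)⁻¹ : ℝ) : EReal) *
      eIntegral (volume.restrict (Set.Ioc (0:ℝ) (2 * Real.pi)))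
        (fun θ : ℝ => u (a + ((r : ℂ) * Complex.exp (θ * Complex.I)) • b))

/-- A set `E`, closed in an open set `Ω ⊆ ℂⁿ`, is complete pluripolar in `Ω` if every point
of `E` has an open neighborhood `U ⊆ Ω` carrying a plurisubharmonic function `φ` with
`E ∩ U = φ⁻¹(-∞)`. -/
def CompletePluripolarIn {n : ℕ} (Ω E : Set (EuclideanSpace ℂ (Fin n))) : Prop :=
  ∀ x ∈ E, ∃ U : Set (EuclideanSpace ℂ (Fin n)), IsOpen U ∧ x ∈ U ∧ U ⊆ Ω ∧
    ∃ φ : EuclideanSpace ℂ (Fin n) → EReal, IsPSH U φ ∧ E ∩ U = {y ∈ U | φ y = ⊥}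

/-- A bounded pseudoconvex domain in `ℂⁿ`: a bounded nonempty connected open set on which
`z ↦ -log dist(z, ℂⁿ ∖ Ω)` is plurisubharmonic. -/
def BoundedPseudoconvexDomain {n : ℕ} (Ω : Set (EuclideanSpace ℂ (Fin n))) : Prop :=
  IsOpen Ω ∧ IsConnected Ω ∧ Bornology.IsBounded Ω ∧
  IsPSH Ω (fun z => ((-Real.log (Metric.infDist z Ωᶜ) : ℝ) : EReal))

/-- The Levi form of a real-valued function `u` on `ℂⁿ` at `x` in direction `v`:
`(1/4)` times the Laplacian at `w = 0` of `w ↦ u (x + w v)`. -/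
def Levi {n : ℕ} (u : EuclideanSpace ℂ (Fin n) → ℝ) (x v : EuclideanSpace ℂ (Fin n)) : ℝ :=
  ((fderiv ℝ (fun w : ℂ => fderiv ℝ (fun w' : ℂ => u (x + w' • v)) w) 0) 1 1 +
   (fderiv ℝ (fun w : ℂ => fderiv ℝ (fun w' : ℂ => u (x + w' • v)) w) 0) Complex.I Complex.I) / 4

/-- The `(1,0)`-differential `∂u(x)(v) = Σⱼ (∂u/∂zⱼ)(x) vⱼ` of a real-valued function `u`
on `ℂⁿ`, computed as `∂g/∂w (0) = (1/2)(∂ₓg - i ∂_y g)(0)` for `g(w) = u(x + w v)`. -/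
def del1 {n : ℕ} (u : EuclideanSpace ℂ (Fin n) → ℝ) (x v : EuclideanSpace ℂ (Fin n)) : ℂ :=
  (((fderiv ℝ (fun w : ℂ => u (x + w • v)) 0) 1 : ℝ) -
    Complex.I * ((fderiv ℝ (fun w : ℂ => u (x + w • v)) 0) Complex.I : ℝ)) / 2

/-!
Apply everything to the holomorphic function `h = f²`, for which `|h| = |f|²`. By the generalized
mean value property, `(s - |w|) |h(u, w)| ≤ s · ⨍_{|ζ| = s} |h(u, ζ)|` for `|w| < s`; integrating
over `r < s < R` in polar coordinates bounds `|h(u, w)|` by the `L¹` norm of `h(u, ·)` on the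
annulus, for every `u ∈ B′`. The same estimate at the centre of a disc, iterated over the
coordinates, bounds `|h(z′, w)|` by the `L¹` norm of `h(·, w)` on a polydisc about `z′` that lies
in `B′`. Tonelli's theorem combines the two bounds.
-/

open Real

theorem circleAverage_eq_integral_Ioo {E : Type*} [NormedAddCommGroup E] [NormedSpace ℝ E]
    (f : ℂ → E) (c : ℂ) (R : ℝ) :
    circleAverage f c R = (2 * π)⁻¹ • ∫ t in Ioo (-π) π, f (circleMap c R t) := by
  rw [circleAverage_eq_integral_add (-π), intervalIntegral.integral_comp_add_right
    (fun t ↦ f (circleMap c R t)), intervalIntegral.integral_of_le (by linarith [pi_pos]),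
    integral_Ioc_eq_integral_Ioo]
  ring_nf

theorem mul_enorm_le_lintegral_circleMap {g : ℂ → ℂ} {c w : ℂ} {s : ℝ}
    (hg : DiffContOnCl ℂ g (ball c s)) (hw : w ∈ ball c s) :
    ENNReal.ofReal (2 * π * (s - ‖w - c‖)) * ‖g w‖ₑ ≤
      ENNReal.ofReal s * ∫⁻ t in Ioo (-π) π, ‖g (circleMap c s t)‖ₑ := by
  have hs : 0 < s := pos_of_mem_ball hw
  have hws : ‖w - c‖ < s := by rwa [mem_ball, dist_eq_norm] at hw
  have kernel_le : ∀ t, ENNReal.ofReal (s - ‖w - c‖) *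
      ‖((circleMap c s t - c) / (circleMap c s t - w)) • g (circleMap c s t)‖ₑ ≤
        ENNReal.ofReal s * ‖g (circleMap c s t)‖ₑ := by
    intro t
    have hz : ‖circleMap c s t - c‖ = s := by simp [abs_of_pos hs]
    have hzw : s - ‖w - c‖ ≤ ‖circleMap c s t - w‖ := by
      have := norm_sub_norm_le (circleMap c s t - c) (w - c)
      rwa [hz, sub_sub_sub_cancel_right] at this
    have hzw0 : 0 < ‖circleMap c s t - w‖ := by linarith
    rw [← ofReal_norm, ← ofReal_norm, ← ENNReal.ofReal_mul (by linarith),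
      ← ENNReal.ofReal_mul hs.le, norm_smul, norm_div, hz]
    apply ENNReal.ofReal_le_ofReal
    rw [← mul_assoc, mul_div_assoc']
    have : (s - ‖w - c‖) * s / ‖circleMap c s t - w‖ ≤ s := by
      rw [div_le_iff₀ hzw0]; nlinarith
    exact mul_le_mul_of_nonneg_right this (norm_nonneg _)
  have mean_value : circleAverage (fun z ↦ ((z - c) / (z - w)) • g z) c s = g w := by
    rw [← abs_of_pos hs] at hg hw
    exact hg.circleAverage_smul_div hw
  rw [circleAverage_eq_integral_Ioo] at mean_value
  calc ENNReal.ofReal (2 * π * (s - ‖w - c‖)) * ‖g w‖ₑ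
      = ENNReal.ofReal (s - ‖w - c‖) * ‖∫ t in Ioo (-π) π,
          ((circleMap c s t - c) / (circleMap c s t - w)) • g (circleMap c s t)‖ₑ := by
        rw [← mean_value, enorm_smul, ← mul_assoc, Real.enorm_eq_ofReal (by positivity),
          ← ENNReal.ofReal_mul (by positivity)]
        congr 2
        field_simp
    _ ≤ ENNReal.ofReal (s - ‖w - c‖) * ∫⁻ t in Ioo (-π) π,
          ‖((circleMap c s t - c) / (circleMap c s t - w)) • g (circleMap c s t)‖ₑ := by
        gcongr
        exact enorm_integral_le_lintegral_enorm _
    _ ≤ ENNReal.ofReal s * ∫⁻ t in Ioo (-π) π, ‖g (circleMap c s t)‖ₑ := by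
        rw [← lintegral_const_mul' _ _ ENNReal.ofReal_ne_top,
          ← lintegral_const_mul' _ _ ENNReal.ofReal_ne_top]
        exact lintegral_mono kernel_le

def annulus (c : ℂ) (a b : ℝ) : Set ℂ := {z | a < ‖z - c‖ ∧ ‖z - c‖ < b}

theorem isOpen_annulus (c : ℂ) (a b : ℝ) : IsOpen (annulus c a b) := by
  have : Continuous fun z : ℂ ↦ ‖z - c‖ := by fun_prop
  exact (isOpen_lt continuous_const this).inter (isOpen_lt this continuous_const)

theorem lintegral_annulus_eq {F : ℂ → ℝ≥0∞} {c : ℂ} {a b : ℝ} (ha : 0 ≤ a)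
    (hF : ContinuousOn F (annulus c a b)) :
    ∫⁻ z in annulus c a b, F z =
      ∫⁻ s in Ioo a b, ENNReal.ofReal s * ∫⁻ t in Ioo (-π) π, F (circleMap c s t) := by
  set P := (fun p : ℝ × ℝ ↦ circleMap c p.1 p.2) ⁻¹' annulus c a b
  have hpolar : ∀ p : ℝ × ℝ, c + Complex.polarCoord.symm p = circleMap c p.1 p.2 := fun p ↦ by
    simp [Complex.polarCoord_symm_apply, circleMap, Complex.exp_mul_I, Complex.ofReal_cos,
      Complex.ofReal_sin]
  have hP : P ∩ polarCoord.target = Ioo a b ×ˢ Ioo (-π) π := by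
    ext ⟨s, t⟩
    simp only [P, ← hpolar, polarCoord_target, annulus, mem_inter_iff, mem_prod, mem_preimage,
      mem_Ioi, mem_ofPred_eq, add_sub_cancel_left, Complex.norm_polarCoord_symm, mem_Ioo]
    constructor
    · rintro ⟨⟨h1, h2⟩, hs, ht⟩
      exact ⟨⟨by rwa [abs_of_pos hs] at h1, by rwa [abs_of_pos hs] at h2⟩, ht⟩
    · rintro ⟨⟨h1, h2⟩, ht⟩
      have hs : 0 < s := ha.trans_lt h1
      exact ⟨⟨by rwa [abs_of_pos hs], by rwa [abs_of_pos hs]⟩, hs, ht⟩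
  have hcont : Continuous fun p : ℝ × ℝ ↦ circleMap c p.1 p.2 := by
    simp only [circleMap]; fun_prop
  have hmeas : AEMeasurable (fun p : ℝ × ℝ ↦ ENNReal.ofReal p.1 * F (circleMap c p.1 p.2))
      ((volume.prod volume).restrict (Ioo a b ×ˢ Ioo (-π) π)) := by
    rw [← Measure.volume_eq_prod, ← hP]
    refine (ENNReal.measurable_ofReal.comp measurable_fst).aemeasurable.mul
      (ContinuousOn.aemeasurable (hF.comp hcont.continuousOn fun p hp ↦ hp.1) ?_)
    exact ((isOpen_annulus c a b).preimage hcont).measurableSet.inter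
      polarCoord.open_target.measurableSet
  rw [← lintegral_indicator (isOpen_annulus c a b).measurableSet,
    ← lintegral_add_left_eq_self _ c, ← Complex.lintegral_comp_polarCoord_symm]
  have hind : (fun p : ℝ × ℝ ↦
      ENNReal.ofReal p.1 * (annulus c a b).indicator F (circleMap c p.1 p.2)) =
        P.indicator fun p ↦ ENNReal.ofReal p.1 * F (circleMap c p.1 p.2) := by
    ext p
    by_cases hp : p ∈ P <;> simp_all [P]
  simp_rw [hpolar, smul_eq_mul]
  rw [hind, setLIntegral_indicator ((isOpen_annulus c a b).preimage hcont).measurableSet, hP,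
    Measure.volume_eq_prod, setLIntegral_prod _ hmeas]
  congr with s
  exact lintegral_const_mul' _ _ ENNReal.ofReal_ne_top

theorem annulus_subset_ball (c : ℂ) (a b : ℝ) : annulus c a b ⊆ ball c b :=
  fun _ hz ↦ mem_ball_iff_norm.mpr hz.2

theorem mul_enorm_le_lintegral_annulus {g : ℂ → ℂ} {c w : ℂ} {θ a b : ℝ}
    (hg : DifferentiableOn ℂ g (ball c b)) (hw : ‖w - c‖ ≤ θ) (hθa : θ < a) :
    ENNReal.ofReal (2 * π * (a - θ) * (b - a)) * ‖g w‖ₑ ≤ ∫⁻ z in annulus c a b, ‖g z‖ₑ := by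
  have ha : 0 ≤ a := ((norm_nonneg _).trans hw).trans hθa.le
  have hcont : ContinuousOn (‖g ·‖ₑ) (annulus c a b) :=
    continuous_enorm.comp_continuousOn (hg.continuousOn.mono (annulus_subset_ball c a b))
  rw [lintegral_annulus_eq ha hcont]
  calc ENNReal.ofReal (2 * π * (a - θ) * (b - a)) * ‖g w‖ₑ
      = ∫⁻ _ in Ioo a b, ENNReal.ofReal (2 * π * (a - θ)) * ‖g w‖ₑ := by
        rw [setLIntegral_const, Real.volume_Ioo, mul_right_comm (ENNReal.ofReal _),
          ← ENNReal.ofReal_mul (by nlinarith [pi_pos])]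
    _ ≤ ∫⁻ s in Ioo a b, ENNReal.ofReal s * ∫⁻ t in Ioo (-π) π, ‖g (circleMap c s t)‖ₑ := by
        refine setLIntegral_mono' measurableSet_Ioo fun s hs ↦ ?_
        have hws : ‖w - c‖ < s := by linarith [hs.1]
        refine le_trans ?_ (mul_enorm_le_lintegral_circleMap
          (hg.diffContOnCl_ball (closedBall_subset_ball hs.2)) (mem_ball_iff_norm.mpr hws))
        gcongr
        linarith [hs.1]

theorem mul_enorm_le_lintegral_ball {g : ℂ → ℂ} {c : ℂ} {ρ : ℝ} (hρ : 0 < ρ)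
    (hg : DifferentiableOn ℂ g (ball c ρ)) :
    ENNReal.ofReal (π * ρ ^ 2 / 2) * ‖g c‖ₑ ≤ ∫⁻ z in ball c ρ, ‖g z‖ₑ :=
  calc ENNReal.ofReal (π * ρ ^ 2 / 2) * ‖g c‖ₑ
      = ENNReal.ofReal (2 * π * (ρ / 2 - 0) * (ρ - ρ / 2)) * ‖g c‖ₑ := by ring_nf
    _ ≤ ∫⁻ z in annulus c (ρ / 2) ρ, ‖g z‖ₑ :=
        mul_enorm_le_lintegral_annulus hg (by simp) (by positivity)
    _ ≤ ∫⁻ z in ball c ρ, ‖g z‖ₑ := lintegral_mono_set (annulus_subset_ball c _ ρ)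

theorem mul_mul_le_setLIntegral_prod {α β : Type*} [MeasurableSpace α] [MeasurableSpace β]
    {μ : Measure α} {ν : Measure β} [SFinite μ] [SFinite ν] {s : Set α} {t : Set β}
    {F : α × β → ℝ≥0∞} {x₀ : α} {y₀ : β} {a b : ℝ≥0∞} (hs : MeasurableSet s)
    (hF : AEMeasurable F ((μ.prod ν).restrict (s ×ˢ t)))
    (h₁ : a * F (x₀, y₀) ≤ ∫⁻ x in s, F (x, y₀) ∂μ)
    (h₂ : ∀ x ∈ s, b * F (x, y₀) ≤ ∫⁻ y in t, F (x, y) ∂ν) :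
    b * a * F (x₀, y₀) ≤ ∫⁻ p in s ×ˢ t, F p ∂μ.prod ν :=
  calc b * a * F (x₀, y₀) ≤ b * ∫⁻ x in s, F (x, y₀) ∂μ := by
        rw [mul_assoc]; gcongr
    _ ≤ ∫⁻ x in s, b * F (x, y₀) ∂μ := lintegral_const_mul_le _ _
    _ ≤ ∫⁻ x in s, ∫⁻ y in t, F (x, y) ∂ν ∂μ := setLIntegral_mono' hs h₂
    _ = ∫⁻ p in s ×ˢ t, F p ∂μ.prod ν := (setLIntegral_prod F hF).symm

theorem pow_mul_enorm_le_lintegral_ball_pi {m : ℕ} {g : (Fin m → ℂ) → ℂ} {c : Fin m → ℂ}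
    {ρ : ℝ} (hρ : 0 < ρ) (hg : DifferentiableOn ℂ g (ball c ρ)) :
    ENNReal.ofReal (π * ρ ^ 2 / 2) ^ m * ‖g c‖ₑ ≤ ∫⁻ u in ball c ρ, ‖g u‖ₑ := by
  induction m with
  | zero =>
    rw [ball_pi _ hρ]
    simp [Subsingleton.elim _ c, volume_pi]
  | succ m ih =>
    set E := Fin.consEquivL ℂ fun _ : Fin (m + 1) ↦ ℂ
    have hE : ⇑(MeasurableEquiv.piFinSuccAbove (fun _ : Fin (m + 1) ↦ ℂ) 0).symm = ⇑E := by
      ext p : 1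
      simp only [MeasurableEquiv.piFinSuccAbove_symm_apply, Fin.insertNthEquiv_zero]
      rfl
    have hpre : E ⁻¹' ball c ρ = ball (c 0) ρ ×ˢ ball (Fin.tail c) ρ := by
      ext ⟨z, v⟩
      simp [E, ball_pi _ hρ, Fin.forall_fin_succ, Fin.tail]
    have hmaps : MapsTo E (ball (c 0) ρ ×ˢ ball (Fin.tail c) ρ) (ball c ρ) := by
      rw [← hpre]; exact mapsTo_preimage _ _
    have hc : E (c 0, Fin.tail c) = c := Fin.cons_self_tail c
    have hmp : MeasurePreserving E volume volume := by
      rw [← hE]; exact (volume_preserving_piFinSuccAbove _ 0).symm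
    rw [← hmp.setLIntegral_comp_preimage_emb E.toHomeomorph.measurableEmbedding, hpre, ← hc,
      pow_succ]
    refine mul_mul_le_setLIntegral_prod measurableSet_ball ?_ ?_ fun z hz ↦ ih ?_
    · exact (continuous_enorm.comp_continuousOn (hg.continuousOn.comp E.continuous.continuousOn
        hmaps)).aemeasurable (measurableSet_ball.prod measurableSet_ball)
    · refine mul_enorm_le_lintegral_ball hρ (hg.comp ?_ fun z hz ↦ hmaps ⟨hz, mem_ball_self hρ⟩)
      fun_prop
    · refine hg.comp ?_ fun v hv ↦ hmaps ⟨hz, hv⟩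
      fun_prop

instance (k : ℕ) : SigmaFinite (volume : Measure (EuclideanSpace ℂ (Fin k))) :=
  (MeasurableEquiv.toLp 2 (Fin k → ℂ)).sigmaFinite_map

theorem EuclideanSpace.dist_le_sqrt_card_mul {ι 𝕜 : Type*} [Fintype ι] [RCLike 𝕜]
    {x y : EuclideanSpace 𝕜 ι} {ρ : ℝ} (hρ : 0 ≤ ρ) (h : ∀ i, dist (x i) (y i) ≤ ρ) :
    dist x y ≤ √(Fintype.card ι) * ρ := by
  rw [EuclideanSpace.dist_eq, ← abs_of_nonneg hρ, ← Real.sqrt_sq_eq_abs,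
    ← Real.sqrt_mul (by positivity)]
  refine Real.sqrt_le_sqrt ?_
  calc ∑ i, dist (x i) (y i) ^ 2 ≤ ∑ _i : ι, ρ ^ 2 :=
        Finset.sum_le_sum fun i _ ↦ pow_le_pow_left₀ dist_nonneg (h i) 2
    _ = Fintype.card ι * ρ ^ 2 := by simp

theorem pow_mul_enorm_le_setLIntegral_of_closedBall_subset {k : ℕ}
    {g : EuclideanSpace ℂ (Fin k) → ℂ} {z : EuclideanSpace ℂ (Fin k)} {ρ : ℝ}
    {s : Set (EuclideanSpace ℂ (Fin k))} (hρ : 0 < ρ) (hs : closedBall z (√k * ρ) ⊆ s)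
    (hg : DifferentiableOn ℂ g s) :
    ENNReal.ofReal (π * ρ ^ 2 / 2) ^ k * ‖g z‖ₑ ≤ ∫⁻ u in s, ‖g u‖ₑ := by
  set φ : (Fin k → ℂ) ≃ᵐ EuclideanSpace ℂ (Fin k) := MeasurableEquiv.toLp 2 (Fin k → ℂ)
  have hφ : MeasurePreserving φ := ⟨φ.measurable, rfl⟩
  have hmaps : MapsTo φ (ball (WithLp.ofLp z) ρ) s := fun v hv ↦ hs <| by
    simpa using EuclideanSpace.dist_le_sqrt_card_mul (x := φ v) hρ.le fun i ↦
      (dist_le_pi_dist v (WithLp.ofLp z) i).trans (mem_ball.mp hv).le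
  calc ENNReal.ofReal (π * ρ ^ 2 / 2) ^ k * ‖g (φ (WithLp.ofLp z))‖ₑ
      ≤ ∫⁻ v in ball (WithLp.ofLp z) ρ, ‖g (φ v)‖ₑ :=
        pow_mul_enorm_le_lintegral_ball_pi hρ
          (hg.comp (EuclideanSpace.equiv (Fin k) ℂ).symm.differentiable.differentiableOn hmaps)
    _ ≤ ∫⁻ v in φ ⁻¹' s, ‖g (φ v)‖ₑ := lintegral_mono_set hmaps.subset_preimage
    _ = ∫⁻ u in s, ‖g u‖ₑ := hφ.setLIntegral_comp_preimage_emb φ.measurableEmbedding (‖g ·‖ₑ) s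

theorem mul_mul_enorm_le_lintegral_ball_prod_annulus {k : ℕ}
    {h : EuclideanSpace ℂ (Fin k) × ℂ → ℂ} {z : EuclideanSpace ℂ (Fin k)} {w : ℂ} {θ ρ r R : ℝ}
    (hh : DifferentiableOn ℂ h (ball 0 1 ×ˢ ball 0 1)) (hρ : 0 < ρ) (hz : √k * ρ + ‖z‖ < 1)
    (hw : ‖w‖ ≤ θ) (hθr : θ < r) (hrR : r < R) (hR : R ≤ 1) :
    ENNReal.ofReal (2 * π * (r - θ) * (R - r)) * ENNReal.ofReal (π * ρ ^ 2 / 2) ^ k *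
      ‖h (z, w)‖ₑ ≤ ∫⁻ p in ball 0 1 ×ˢ annulus 0 r R, ‖h p‖ₑ := by
  have hann : annulus (0 : ℂ) r R ⊆ ball 0 1 :=
    (annulus_subset_ball 0 r R).trans (ball_subset_ball hR)
  have hw1 : w ∈ ball (0 : ℂ) 1 := mem_ball_zero_iff.2 (by linarith)
  rw [Measure.volume_eq_prod]
  refine mul_mul_le_setLIntegral_prod measurableSet_ball ?_ ?_ fun u hu ↦ ?_
  · exact (continuous_enorm.comp_continuousOn (hh.continuousOn.mono (prod_mono le_rfl hann)))
      |>.aemeasurable (measurableSet_ball.prod (isOpen_annulus 0 r R).measurableSet)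
  · refine pow_mul_enorm_le_setLIntegral_of_closedBall_subset hρ
      (closedBall_subset_ball' (by rwa [dist_zero_right])) (hh.comp (by fun_prop) ?_)
    exact fun u hu ↦ ⟨hu, hw1⟩
  · exact mul_enorm_le_lintegral_annulus
      (hh.comp (by fun_prop) fun ζ hζ ↦ ⟨hu, ball_subset_ball hR hζ⟩) (by simpa using hw) hθr

theorem sup_bound_by_L2_on_annular_region_general
    (n : ℕ) (θ r R : ℝ)
    (hθr : θ < r) (hrR : r < R) (hR : R < 1) :
    ∃ C : ℝ, 0 < C ∧
      ∀ f : EuclideanSpace ℂ (Fin (n - 1)) × ℂ → ℂ,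
        DifferentiableOn ℂ f
          (Metric.ball (0 : EuclideanSpace ℂ (Fin (n - 1))) 1 ×ˢ Metric.ball (0 : ℂ) 1) →
        ∀ z' : EuclideanSpace ℂ (Fin (n - 1)), ‖z'‖ ≤ θ → ∀ w : ℂ, ‖w‖ ≤ θ →
          ENNReal.ofReal (‖f (z', w)‖ ^ 2) ≤
            ENNReal.ofReal C *
              ∫⁻ p in (Metric.ball (0 : EuclideanSpace ℂ (Fin (n - 1))) 1 ×ˢ
                  {w : ℂ | r < ‖w‖ ∧ ‖w‖ < R}),
                ENNReal.ofReal (‖f p‖ ^ 2) := by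
  set ρ := (1 - θ) / (√(n - 1 : ℕ) + 1)
  have hρ : 0 < ρ := div_pos (by linarith) (by positivity)
  have hρθ : √(n - 1 : ℕ) * ρ + θ < 1 := by
    have : √(n - 1 : ℕ) * ρ < 1 - θ := by
      rw [mul_div_assoc', div_lt_iff₀ (by positivity)]; nlinarith
    linarith
  have hrθ := sub_pos.2 hθr
  have hRr := sub_pos.2 hrR
  set K := 2 * π * (r - θ) * (R - r) * (π * ρ ^ 2 / 2) ^ (n - 1)
  have hK : 0 < K := by positivity
  refine ⟨K⁻¹, inv_pos.2 hK, fun f hf z' hz' w hw ↦ ?_⟩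
  have key := mul_mul_enorm_le_lintegral_ball_prod_annulus (hf.pow 2) hρ (by linarith) hw hθr
    hrR hR.le
  rw [← ENNReal.ofReal_pow (by positivity), ← ENNReal.ofReal_mul (by positivity)] at key
  have hsq : ∀ p, ENNReal.ofReal (‖f p‖ ^ 2) = ‖f p ^ 2‖ₑ := fun p ↦ by
    rw [ENNReal.ofReal_pow (norm_nonneg _), ofReal_norm, enorm_pow]
  have hann : {w : ℂ | r < ‖w‖ ∧ ‖w‖ < R} = annulus 0 r R := by simp [annulus]
  simp_rw [hsq, hann, ENNReal.ofReal_inv_of_pos hK]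
  rwa [← ENNReal.mul_le_iff_le_inv (by positivity) ENNReal.ofReal_ne_top]

/-- The final estimate in the paper's proof of Theorem 1.2 (via the Cauchy integral formula in
the last variable): for `n ≥ 2` and `0 < θ < r < R < 1` there is a constant `C > 0` depending
only on `n, θ, r, R` such that every holomorphic function `f` on `B′ × Δ ⊆ ℂ^{n-1} × ℂ`
(unit ball times unit disc) satisfies
`|f(z′, zₙ)|² ≤ C ∫_{B′ × {r < |w| < R}} |f|² dV` whenever `|z′| ≤ θ` and `|zₙ| ≤ θ`. -/
theorem sup_bound_by_L2_on_annular_region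
    (n : ℕ) (hn : 2 ≤ n) (θ r R : ℝ)
    (hθ : 0 < θ) (hθr : θ < r) (hrR : r < R) (hR : R < 1) :
    ∃ C : ℝ, 0 < C ∧
      ∀ f : EuclideanSpace ℂ (Fin (n - 1)) × ℂ → ℂ,
        DifferentiableOn ℂ f
          (Metric.ball (0 : EuclideanSpace ℂ (Fin (n - 1))) 1 ×ˢ Metric.ball (0 : ℂ) 1) →
        ∀ z' : EuclideanSpace ℂ (Fin (n - 1)), ‖z'‖ ≤ θ → ∀ w : ℂ, ‖w‖ ≤ θ →
          ENNReal.ofReal (‖f (z', w)‖ ^ 2) ≤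
            ENNReal.ofReal C *
              ∫⁻ p in (Metric.ball (0 : EuclideanSpace ℂ (Fin (n - 1))) 1 ×ˢ
                  {w : ℂ | r < ‖w‖ ∧ ‖w‖ < R}),
                ENNReal.ofReal (‖f p‖ ^ 2) :=
  sup_bound_by_L2_on_annular_region_general n θ r R hθr hrR hR

end
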